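/- arXiv:2501.08786 — 5 statements merged into one kernel-verified Lean document; each statement's English description precedes it below -/
import Mathlib

section
/- Define H(q) = (A Aᵀ) · q^{⊗p} for q ∈ S^D, where A ∈ ℝ^{D^p × L} and q^{⊗p} denotes the p-fold Kronecker tensor power of q, viewed as a D^p × D^p matrix. Then H is nondecreasing on S^D_+ with respect to the Loewner order: if q1, q2 ∈ S^D_+ and q2 − q1 ∈ S^D_+, then H(q1) ≤ H(q2). Moreover, the gradient ∇H(a) lies in S^D_+ for every a ∈ S^D_+. -/
open Filter Topology

/-- Frobenius inner product for matrices with general finite index types. -/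
noncomputable def dotpG {m n : Type*} [Fintype m] [Fintype n] (a b : Matrix m n ℝ) : ℝ :=
  ∑ i, ∑ j, a i j * b i j

/-- The `p`-fold Kronecker tensor power of a `D × D` matrix, viewed as a matrix indexed by
`p`-tuples of indices. -/
noncomputable def kpow {D : ℕ} (p : ℕ) (q : Matrix (Fin D) (Fin D) ℝ) :
    Matrix (Fin p → Fin D) (Fin p → Fin D) ℝ :=
  fun d d' => ∏ i, q (d i) (d' i)

/-- `H(q) = (A Aᵀ) · q^{⊗p}`. -/
noncomputable def Hfun {D p L : ℕ} (A : Matrix (Fin p → Fin D) (Fin L) ℝ)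
    (q : Matrix (Fin D) (Fin D) ℝ) : ℝ :=
  dotpG (A * A.transpose) (kpow p q)

/-!
Entrywise, `q^{⊗p}` is the Hadamard product of the `p` pullbacks of `q` along the coordinate
projections `d ↦ d m`. By the Schur product theorem and
`X' ⊙ Y' - X ⊙ Y = (X' - X) ⊙ Y' + X ⊙ (Y' - Y)`, the map `q ↦ q^{⊗p}` is therefore
Loewner-monotone on the PSD cone, and pairing with the PSD matrix `A Aᵀ` is nonnegative on PSD
matrices (again by Schur: `M · N = 𝟙ᵀ (M ⊙ N) 𝟙`). This gives the monotonicity of `H`.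

`H` is a polynomial, hence differentiable, and `H (a + t c) ≥ H a` for PSD `c` and `t ≥ 0`, so
its derivative at `a` is nonnegative on every PSD direction, in particular on `x xᵀ`. The
Frobenius representative of this derivative, symmetrized (which does not change its pairing
with symmetric directions), is therefore a PSD matrix.
-/

open Matrix
open scoped ComplexOrder

namespace Matrix

section piKronecker

variable {α κ n : Type*} [CommSemiring α]

def piKronecker (s : Finset κ) (Q : κ → Matrix n n α) :
    Matrix (κ → n) (κ → n) α :=
  of fun d d' => ∏ m ∈ s, Q m (d m) (d' m)

lemma piKronecker_empty (Q : κ → Matrix n n α) : piKronecker ∅ Q = vecMulVec 1 1 := by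
  ext
  simp [piKronecker, vecMulVec]

lemma piKronecker_insert [DecidableEq κ] {a : κ} {s : Finset κ} (ha : a ∉ s)
    (Q : κ → Matrix n n α) :
    piKronecker (insert a s) Q = (Q a).submatrix (· a) (· a) ⊙ piKronecker s Q := by
  ext
  simp [piKronecker, Finset.prod_insert ha]

end piKronecker

lemma hadamard_sub_hadamard {α m n : Type*} [CommRing α] (X X' Y Y' : Matrix m n α) :
    X' ⊙ Y' - X ⊙ Y = (X' - X) ⊙ Y' + X ⊙ (Y' - Y) := by
  ext
  simp only [sub_apply, add_apply, hadamard_apply]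
  ring

variable {𝕜 κ n : Type*} [RCLike 𝕜]

theorem PosSemidef.hadamard_sub_hadamard {X X' Y Y' : Matrix n n 𝕜} (hX : X.PosSemidef)
    (hY' : Y'.PosSemidef) (hXX' : (X' - X).PosSemidef) (hYY' : (Y' - Y).PosSemidef) :
    (X' ⊙ Y' - X ⊙ Y).PosSemidef := by
  rw [Matrix.hadamard_sub_hadamard]
  exact (hXX'.hadamard hY').add (hX.hadamard hYY')

variable [DecidableEq κ] [Finite κ] [Finite n]

theorem posSemidef_piKronecker {s : Finset κ} {Q : κ → Matrix n n 𝕜}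
    (hQ : ∀ m ∈ s, (Q m).PosSemidef) : (piKronecker s Q).PosSemidef := by
  induction s using Finset.induction_on with
  | empty => simpa [piKronecker_empty] using posSemidef_vecMulVec_self_star (1 : (κ → n) → 𝕜)
  | insert a s ha ih =>
    simp only [Finset.forall_mem_insert] at hQ
    rw [piKronecker_insert ha]
    exact (hQ.1.submatrix _).hadamard (ih hQ.2)

theorem posSemidef_piKronecker_sub {s : Finset κ} {Q Q' : κ → Matrix n n 𝕜}
    (hQ : ∀ m ∈ s, (Q m).PosSemidef) (hQQ' : ∀ m ∈ s, (Q' m - Q m).PosSemidef) :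
    (piKronecker s Q' - piKronecker s Q).PosSemidef := by
  induction s using Finset.induction_on with
  | empty =>
    rw [piKronecker_empty, piKronecker_empty, sub_self]
    exact .zero
  | insert a s ha ih =>
    simp only [Finset.forall_mem_insert] at hQ hQQ'
    rw [piKronecker_insert ha, piKronecker_insert ha]
    refine (hQ.1.submatrix _).hadamard_sub_hadamard
      (posSemidef_piKronecker fun m hm => ?_) ?_ (ih hQ.2 hQQ'.2)
    · simpa using (hQ.2 m hm).add (hQQ'.2 m hm)
    · simpa [submatrix_sub] using hQQ'.1.submatrix fun d : κ → n => d a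

end Matrix

section dotpG

lemma dotpG_sub_right {m n : Type*} [Fintype m] [Fintype n] (M N N' : Matrix m n ℝ) :
    dotpG M (N - N') = dotpG M N - dotpG M N' := by
  simp [dotpG, mul_sub]

variable {n : Type*} [Fintype n]

lemma dotpG_eq_dotProduct_hadamard_mulVec (M N : Matrix n n ℝ) :
    dotpG M N = 1 ⬝ᵥ (M ⊙ N) *ᵥ 1 := by
  simp [dotpG, dotProduct, mulVec]

lemma Matrix.PosSemidef.dotpG_nonneg {M N : Matrix n n ℝ} (hM : M.PosSemidef)
    (hN : N.PosSemidef) : 0 ≤ dotpG M N := by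
  simpa [dotpG_eq_dotProduct_hadamard_mulVec] using (hM.hadamard hN).dotProduct_mulVec_nonneg 1

lemma dotProduct_mulVec_eq_dotpG_vecMulVec (M : Matrix n n ℝ) (x : n → ℝ) :
    star x ⬝ᵥ M *ᵥ x = dotpG M (vecMulVec x x) := by
  simp only [dotProduct, mulVec, dotpG, vecMulVec_apply, star_trivial, Finset.mul_sum]
  exact Finset.sum_congr rfl fun i _ => Finset.sum_congr rfl fun j _ => by ring

end dotpG

theorem posSemidef_kpow_sub {D : ℕ} (p : ℕ) {q₁ q₂ : Matrix (Fin D) (Fin D) ℝ}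
    (h₁ : q₁.PosSemidef) (h₁₂ : (q₂ - q₁).PosSemidef) : (kpow p q₂ - kpow p q₁).PosSemidef :=
  posSemidef_piKronecker_sub (s := Finset.univ) (fun _ _ => h₁) fun _ _ => h₁₂

theorem Hfun_mono {D p L : ℕ} (A : Matrix (Fin p → Fin D) (Fin L) ℝ)
    {q₁ q₂ : Matrix (Fin D) (Fin D) ℝ} (h₁ : q₁.PosSemidef) (h₁₂ : (q₂ - q₁).PosSemidef) :
    Hfun A q₁ ≤ Hfun A q₂ := by
  have hAAt : (A * Aᵀ).PosSemidef := by
    simpa using posSemidef_self_mul_conjTranspose A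
  have := hAAt.dotpG_nonneg (posSemidef_kpow_sub p h₁ h₁₂)
  rwa [dotpG_sub_right, sub_nonneg] at this

section symmGradient

lemma LinearMap.apply_eq_sum_mul_single {R m n : Type*} [CommSemiring R] [Fintype m]
    [Fintype n] [DecidableEq m] [DecidableEq n] (φ : Matrix m n R →ₗ[R] R) (b : Matrix m n R) :
    φ b = ∑ i, ∑ j, b i j * φ (Matrix.single i j 1) := by
  conv_lhs => rw [matrix_eq_sum_single b]
  simp only [map_sum]
  refine Finset.sum_congr rfl fun i _ => Finset.sum_congr rfl fun j _ => ?_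
  rw [← smul_eq_mul, ← map_smul, smul_single, smul_eq_mul, mul_one]

variable {n : Type*} [Fintype n] [DecidableEq n]

noncomputable def symmGradient (φ : Matrix n n ℝ →ₗ[ℝ] ℝ) : Matrix n n ℝ :=
  of fun i j => (φ (Matrix.single i j 1) + φ (Matrix.single j i 1)) / 2

lemma dotpG_symmGradient (φ : Matrix n n ℝ →ₗ[ℝ] ℝ) {b : Matrix n n ℝ} (hb : b.IsSymm) :
    dotpG (symmGradient φ) b = φ b := by
  have hswap : ∑ i, ∑ j, φ (Matrix.single j i 1) / 2 * b i j
      = ∑ i, ∑ j, φ (Matrix.single i j 1) / 2 * b i j := by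
    rw [Finset.sum_comm]
    exact Finset.sum_congr rfl fun i _ => Finset.sum_congr rfl fun j _ => by rw [hb.apply i j]
  rw [φ.apply_eq_sum_mul_single]
  simp only [dotpG, symmGradient, of_apply, add_div, add_mul, Finset.sum_add_distrib, hswap,
    ← two_mul, Finset.mul_sum]
  exact Finset.sum_congr rfl fun i _ => Finset.sum_congr rfl fun j _ => by ring

lemma posSemidef_symmGradient {φ : Matrix n n ℝ →ₗ[ℝ] ℝ}
    (hφ : ∀ x, 0 ≤ φ (vecMulVec x x)) : (symmGradient φ).PosSemidef := by
  refine .of_dotProduct_mulVec_nonneg ?_ fun x => ?_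
  · ext i j
    simp [symmGradient, add_comm]
  · rw [dotProduct_mulVec_eq_dotpG_vecMulVec,
      dotpG_symmGradient (b := vecMulVec x x) _ (IsSymm.ext fun i j => mul_comm (x j) (x i))]
    exact hφ x

end symmGradient

lemma HasFDerivAt.tendsto_slope_along {E : Type*} [NormedAddCommGroup E] [NormedSpace ℝ E]
    {f : E → ℝ} {f' : E →L[ℝ] ℝ} {a : E} (hf : HasFDerivAt f f' a) (b : E) :
    Tendsto (fun ε : ℝ => ε⁻¹ * (f (a + ε • b) - f a)) (𝓝[≠] 0) (𝓝 (f' b)) := by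
  have hline : HasDerivAt (fun ε : ℝ => f (a + ε • b)) (f' b) 0 := by
    refine HasFDerivAt.comp_hasDerivAt (f := fun ε : ℝ => a + ε • b) 0 ?_ ?_
    · simpa using hf
    · simpa using (hasDerivAt_id (0 : ℝ)).smul_const b |>.const_add a
  rw [hasDerivAt_iff_tendsto_slope] at hline
  refine hline.congr fun ε => ?_
  simp [slope_def_field, div_eq_inv_mul]

-- Matrices carry no global norm; any norm gives the same (directional) derivatives.
attribute [local instance] Matrix.normedAddCommGroup Matrix.normedSpace

theorem differentiable_Hfun {D p L : ℕ} (A : Matrix (Fin p → Fin D) (Fin L) ℝ) :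
    Differentiable ℝ (Hfun A) := by
  unfold Hfun dotpG kpow
  fun_prop

theorem fderiv_Hfun_nonneg {D p L : ℕ} (A : Matrix (Fin p → Fin D) (Fin L) ℝ)
    {a c : Matrix (Fin D) (Fin D) ℝ} (ha : a.PosSemidef) (hc : c.PosSemidef) :
    0 ≤ fderiv ℝ (Hfun A) a c := by
  have hmin : IsMinOn (Hfun A) (segment ℝ a (a + c)) a := by
    rw [segment_eq_image', add_sub_cancel_left]
    rintro _ ⟨t, ht, rfl⟩
    exact Hfun_mono A ha (by simpa using hc.smul ht.1)
  exact hmin.localize.hasFDerivWithinAt_nonneg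
    (differentiable_Hfun A a).hasFDerivAt.hasFDerivWithinAt
    (mem_posTangentConeAt_of_segment_subset subset_rfl)

/-- `H` is nondecreasing on the PSD cone in the Loewner order, and its gradient (with respect
to the Frobenius inner product, computed along symmetric directions) is PSD on the cone. -/
theorem stmt_4 {D p L : ℕ} (A : Matrix (Fin p → Fin D) (Fin L) ℝ) :
    (∀ q1 q2 : Matrix (Fin D) (Fin D) ℝ, q1.PosSemidef → q2.PosSemidef →
      (q2 - q1).PosSemidef → Hfun A q1 ≤ Hfun A q2) ∧
    (∀ a : Matrix (Fin D) (Fin D) ℝ, a.PosSemidef →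
      ∃ g : Matrix (Fin D) (Fin D) ℝ, g.PosSemidef ∧
        ∀ b : Matrix (Fin D) (Fin D) ℝ, b.IsSymm →
          Tendsto (fun ε : ℝ => ε⁻¹ * (Hfun A (a + ε • b) - Hfun A a)) (𝓝[≠] 0)
            (𝓝 (dotpG g b))) := by
  refine ⟨fun q₁ q₂ h₁ _ h₁₂ => Hfun_mono A h₁ h₁₂, fun a ha => ?_⟩
  refine ⟨symmGradient (fderiv ℝ (Hfun A) a : Matrix (Fin D) (Fin D) ℝ →ₗ[ℝ] ℝ),
    posSemidef_symmGradient fun x => ?_, fun b hb => ?_⟩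
  · simpa using fderiv_Hfun_nonneg A ha (posSemidef_vecMulVec_self_star x)
  · rw [dotpG_symmGradient _ hb]
    exact (differentiable_Hfun A a).hasFDerivAt.tendsto_slope_along b
end

section
/- The matrix square root map h ↦ √h is differentiable on the open cone S^D_{++} of positive definite matrices, and its directional derivative D_{√h}(a) = lim_{ε→0} ε^{-1}(√(h+εa) − √h) satisfies the bound |D_{√h}(a)| ≤ C |a| |h^{-1}|^{1/2} for some absolute constant C (depending only on D), where |·| denotes the Frobenius norm and h^{-1} the matrix inverse. -/
open Filter Topology

noncomputable def dotp {D : ℕ} (a b : Matrix (Fin D) (Fin D) ℝ) : ℝ :=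
  ∑ i, ∑ j, a i j * b i j

noncomputable def frob {D : ℕ} (a : Matrix (Fin D) (Fin D) ℝ) : ℝ :=
  Real.sqrt (dotp a a)

open Classical in
/-- The matrix square root, extended by `0` outside the PSD cone. -/
noncomputable def msqrt {D : ℕ} (h : Matrix (Fin D) (Fin D) ℝ) : Matrix (Fin D) (Fin D) ℝ :=
  if hp : h.PosSemidef then
    (hp.1.eigenvectorUnitary : Matrix (Fin D) (Fin D) ℝ) *
      Matrix.diagonal ((↑) ∘ (√·) ∘ hp.1.eigenvalues) *
      (star hp.1.eigenvectorUnitary : Matrix (Fin D) (Fin D) ℝ)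
  else 0

/-!
The derivative of `x ↦ x * x` at `B = √h` is the Sylvester operator `x ↦ B x + x B`, which is
injective for `B` positive definite: pairing `B d + d B` with `d` and writing `B = s * s` with `s`
symmetric gives `|s d|² + |d s|²`. By the inverse function theorem the local inverse of squaring
is differentiable at `h`; it agrees with `msqrt` on symmetric matrices near `h`, because it commutes
with transposition (uniqueness of local inverses) and its values near `B` are positive definite
(upper hemicontinuity of the spectrum). The derivative `d` in direction `a` solves
`B d + d B = a`, and the same pairing yields `|d| ≤ |s⁻¹|² |a| = tr(B⁻¹) |a|`; finally
`tr(B⁻¹) ≤ √D |B⁻¹|` and `|B⁻¹|² = tr(h⁻¹) ≤ √D |h⁻¹|`.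
-/

open Matrix WithLp

section Frobenius

variable {D : ℕ}

attribute [local instance] Matrix.frobeniusNormedAddCommGroup Matrix.frobeniusNormedSpace
  Matrix.frobeniusNormedRing Matrix.frobeniusNormedAlgebra

lemma frob_eq_norm (a : Matrix (Fin D) (Fin D) ℝ) : frob a = ‖a‖ := by
  rw [frobenius_norm_def, frob, dotp, Real.sqrt_eq_rpow]
  simp [← sq]

lemma dotp_eq_inner (a b : Matrix (Fin D) (Fin D) ℝ) :
    dotp a b = inner ℝ (toLp 2 fun i => toLp 2 (a i)) (toLp 2 fun i => toLp 2 (b i)) := by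
  simp [dotp, PiLp.inner_apply, mul_comm]

lemma dotp_le_frob_mul_frob (a b : Matrix (Fin D) (Fin D) ℝ) : dotp a b ≤ frob a * frob b := by
  rw [dotp_eq_inner, frob_eq_norm, frob_eq_norm]
  exact real_inner_le_norm _ _

lemma frob_nonneg (a : Matrix (Fin D) (Fin D) ℝ) : 0 ≤ frob a := Real.sqrt_nonneg _

@[simp]
lemma frob_eq_zero {a : Matrix (Fin D) (Fin D) ℝ} : frob a = 0 ↔ a = 0 := by
  rw [frob_eq_norm, norm_eq_zero]

@[simp]
lemma frob_zero : frob (0 : Matrix (Fin D) (Fin D) ℝ) = 0 := frob_eq_zero.mpr rfl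

lemma frob_sq (a : Matrix (Fin D) (Fin D) ℝ) : frob a ^ 2 = dotp a a := by
  rw [dotp_eq_inner, frob_eq_norm, real_inner_self_eq_norm_sq]; rfl

lemma frob_mul_le (a b : Matrix (Fin D) (Fin D) ℝ) : frob (a * b) ≤ frob a * frob b := by
  simpa only [frob_eq_norm] using norm_mul_le a b

lemma frob_one : frob (1 : Matrix (Fin D) (Fin D) ℝ) = √D := by
  rw [frob_eq_norm, ← coe_nnnorm, frobenius_nnnorm_one]; simp

lemma dotp_eq_trace (a b : Matrix (Fin D) (Fin D) ℝ) : dotp a b = (aᵀ * b).trace := by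
  simp only [dotp, trace, diag, mul_apply, transpose_apply]
  exact Finset.sum_comm

lemma dotp_add_right (x y z : Matrix (Fin D) (Fin D) ℝ) :
    dotp x (y + z) = dotp x y + dotp x z := by
  simp only [dotp_eq_trace, Matrix.mul_add, trace_add]

lemma trace_le_sqrt_mul_frob (m : Matrix (Fin D) (Fin D) ℝ) : m.trace ≤ √D * frob m := by
  simpa [dotp_eq_trace, frob_one] using dotp_le_frob_mul_frob 1 m

lemma frob_sq_of_isSymm {m : Matrix (Fin D) (Fin D) ℝ} (hm : m.IsSymm) :
    frob m ^ 2 = (m * m).trace := by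
  rw [frob_sq, dotp_eq_trace, hm.eq]

lemma frob_le_sqrt_of_isSymm {m : Matrix (Fin D) (Fin D) ℝ} (hm : m.IsSymm) :
    frob m ≤ √(√D * frob (m * m)) :=
  Real.le_sqrt_of_sq_le ((frob_sq_of_isSymm hm).trans_le (trace_le_sqrt_mul_frob _))

lemma trace_inv_le_of_isSymm {B : Matrix (Fin D) (Fin D) ℝ} (hB : B.IsSymm) :
    (B⁻¹).trace ≤ √D * √√D * √(frob (B * B)⁻¹) := calc
  (B⁻¹).trace ≤ √D * frob B⁻¹ := trace_le_sqrt_mul_frob _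
  _ ≤ √D * √(√D * frob (B⁻¹ * B⁻¹)) := by gcongr; exact frob_le_sqrt_of_isSymm hB.inv
  _ = √D * √√D * √(frob (B * B)⁻¹) := by
    rw [← Matrix.mul_inv_rev, Real.sqrt_mul (Real.sqrt_nonneg _), mul_assoc]

lemma Matrix.PosDef.eventually_posDef {B : Matrix (Fin D) (Fin D) ℝ} (hB : B.PosDef) :
    ∀ᶠ k in 𝓝 B, k.IsSymm → k.PosDef := by
  have hspec : spectrum ℝ B ⊆ Set.Ioi 0 := by
    rw [hB.isHermitian.spectrum_real_eq_range_eigenvalues]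
    rintro _ ⟨i, rfl⟩
    exact hB.eigenvalues_pos i
  filter_upwards [(upperHemicontinuous_spectrum ℝ _).forall_isOpen B _ isOpen_Ioi hspec]
    with k hk hsym
  have hherm : k.IsHermitian := isHermitian_iff_isSymm.mpr hsym
  refine hherm.posDef_iff_eigenvalues_pos.mpr fun i => hk ?_
  rw [hherm.spectrum_real_eq_range_eigenvalues]
  exact ⟨i, rfl⟩

end Frobenius

section Sylvester

open scoped MatrixOrder

variable {D : ℕ}

lemma exists_posDef_mul_self_eq {h : Matrix (Fin D) (Fin D) ℝ} (hh : h.PosDef) :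
    ∃ B : Matrix (Fin D) (Fin D) ℝ, B.PosDef ∧ B * B = h :=
  ⟨_, hh.isStrictlyPositive.sqrt.posDef, CFC.sqrt_mul_sqrt_self h hh.posSemidef.nonneg⟩

def sylvester (B : Matrix (Fin D) (Fin D) ℝ) :
    Matrix (Fin D) (Fin D) ℝ →ₗ[ℝ] Matrix (Fin D) (Fin D) ℝ :=
  LinearMap.mulLeft ℝ B + LinearMap.mulRight ℝ B

@[simp]
lemma sylvester_apply (B x : Matrix (Fin D) (Fin D) ℝ) : sylvester B x = B * x + x * B := rfl

lemma dotp_mul_self_mul {s : Matrix (Fin D) (Fin D) ℝ} (hs : s.IsSymm)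
    (x : Matrix (Fin D) (Fin D) ℝ) : dotp x (s * s * x) = frob (s * x) ^ 2 := by
  rw [frob_sq, dotp_eq_trace, dotp_eq_trace, transpose_mul, hs.eq, Matrix.mul_assoc,
    Matrix.mul_assoc]

lemma dotp_mul_mul_self {s : Matrix (Fin D) (Fin D) ℝ} (hs : s.IsSymm)
    (x : Matrix (Fin D) (Fin D) ℝ) : dotp x (x * (s * s)) = frob (x * s) ^ 2 := by
  rw [frob_sq, dotp_eq_trace, dotp_eq_trace, transpose_mul, hs.eq, Matrix.mul_assoc,
    trace_mul_comm s, Matrix.mul_assoc, Matrix.mul_assoc]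

lemma frob_le_trace_inv_mul_frob_sylvester {B : Matrix (Fin D) (Fin D) ℝ} (hB : B.PosDef)
    (d : Matrix (Fin D) (Fin D) ℝ) : frob d ≤ (B⁻¹).trace * frob (sylvester B d) := by
  obtain ⟨s, hs, hss⟩ := exists_posDef_mul_self_eq hB
  have hsym : s.IsSymm := isHermitian_iff_isSymm.mp hs.isHermitian
  set a := sylvester B d with ha
  set u := frob (s * d)
  set K := frob s⁻¹
  have hK : K ^ 2 = (B⁻¹).trace := by
    rw [frob_sq_of_isSymm hsym.inv, ← Matrix.mul_inv_rev, hss]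
  have hd : frob d ≤ K * u := by
    simpa [← Matrix.mul_assoc, nonsing_inv_mul _ (s.isUnit_iff_isUnit_det.mp hs.isUnit)] using
      frob_mul_le s⁻¹ (s * d)
  have hu : u ^ 2 ≤ K * u * frob a := calc
    u ^ 2 ≤ u ^ 2 + frob (d * s) ^ 2 := le_add_of_nonneg_right (sq_nonneg _)
    _ = dotp d a := by
      rw [ha, sylvester_apply, dotp_add_right, ← hss, dotp_mul_self_mul hsym, dotp_mul_mul_self hsym]
    _ ≤ frob d * frob a := dotp_le_frob_mul_frob d a
    _ ≤ K * u * frob a := by gcongr; exact frob_nonneg a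
  have hu' : u ≤ K * frob a := by
    have hKa : 0 ≤ K * frob a := mul_nonneg (frob_nonneg _) (frob_nonneg _)
    nlinarith [frob_nonneg (s * d)]
  calc frob d ≤ K * u := hd
    _ ≤ K * (K * frob a) := by gcongr; exact frob_nonneg _
    _ = (B⁻¹).trace * frob a := by rw [← hK]; ring

lemma sylvester_injective {B : Matrix (Fin D) (Fin D) ℝ} (hB : B.PosDef) :
    Function.Injective (sylvester B) := by
  refine (injective_iff_map_eq_zero _).mpr fun x hx => ?_
  have := frob_le_trace_inv_mul_frob_sylvester hB x
  rw [hx, frob_zero, mul_zero] at this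
  exact frob_eq_zero.mp (this.antisymm (frob_nonneg x))

noncomputable def sylvesterEquiv {B : Matrix (Fin D) (Fin D) ℝ} (hB : B.PosDef) :
    Matrix (Fin D) (Fin D) ℝ ≃L[ℝ] Matrix (Fin D) (Fin D) ℝ :=
  (LinearEquiv.ofInjectiveEndo _ (sylvester_injective hB)).toContinuousLinearEquiv

end Sylvester

section SquareRoot

open scoped MatrixOrder

variable {D : ℕ}

lemma msqrt_eq_cfcSqrt {h : Matrix (Fin D) (Fin D) ℝ} (hp : h.PosSemidef) :
    msqrt h = CFC.sqrt h := by
  rw [msqrt, dif_pos hp, CFC.sqrt_eq_cfc, cfc_nnreal_eq_real _ h, hp.1.cfc_eq]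
  simp only [IsHermitian.cfc, Unitary.conjStarAlgAut_apply]
  congr 3
  funext i
  simp [max_eq_left (hp.eigenvalues_nonneg i)]

attribute [local instance] Matrix.frobeniusNormedAddCommGroup Matrix.frobeniusNormedSpace
  Matrix.frobeniusNormedRing Matrix.frobeniusNormedAlgebra

lemma hasStrictFDerivAt_mul_self {B : Matrix (Fin D) (Fin D) ℝ} (hB : B.PosDef) :
    HasStrictFDerivAt (fun x : Matrix (Fin D) (Fin D) ℝ => x * x)
      (sylvesterEquiv hB : Matrix (Fin D) (Fin D) ℝ →L[ℝ] Matrix (Fin D) (Fin D) ℝ) B := by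
  refine ((hasStrictFDerivAt_id B).mul' (hasStrictFDerivAt_id B)).congr_fderiv ?_
  ext x : 1
  rfl

lemma exists_hasFDerivAt_eventuallyEq_msqrt {B : Matrix (Fin D) (Fin D) ℝ} (hB : B.PosDef) :
    ∃ g : Matrix (Fin D) (Fin D) ℝ → Matrix (Fin D) (Fin D) ℝ,
      HasFDerivAt g ((sylvesterEquiv hB).symm : Matrix (Fin D) (Fin D) ℝ →L[ℝ] _) (B * B) ∧
      ∀ᶠ k in 𝓝 (B * B), k.IsSymm → msqrt k = g k := by
  have hF := hasStrictFDerivAt_mul_self hB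
  set g := hF.localInverse _ _ B
  refine ⟨g, hF.to_localInverse.hasFDerivAt, ?_⟩
  have htranspose : ∀ᶠ k in 𝓝 (B * B), (g kᵀ)ᵀ = g k := by
    refine hF.localInverse_unique ?_
    have hBt : Tendsto transpose (𝓝 B) (𝓝 B) := by
      simpa [(isHermitian_iff_isSymm.mp hB.isHermitian).eq] using
        continuous_id.matrix_transpose.tendsto B
    filter_upwards [hBt.eventually hF.eventually_left_inverse] with x hx
    simp only [transpose_mul] at hx ⊢
    rw [show g (xᵀ * xᵀ) = xᵀ from hx, transpose_transpose]
  filter_upwards [hF.eventually_right_inverse, htranspose,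
    hF.localInverse_tendsto.eventually hB.eventually_posDef] with k hsq ht hpd hk
  have hgsymm : (g k).IsSymm := by rwa [hk.eq] at ht
  have hk' : k = (g k)ᴴ * g k := by
    rw [conjTranspose_eq_transpose_of_trivial, hgsymm.eq]; exact hsq.symm
  rw [msqrt_eq_cfcSqrt (hk' ▸ posSemidef_conjTranspose_mul_self _)]
  exact CFC.sqrt_unique hsq (hpd hgsymm).posSemidef.nonneg

lemma tendsto_slope_msqrt {B a : Matrix (Fin D) (Fin D) ℝ} (hB : B.PosDef) (ha : a.IsSymm) :
    Tendsto (fun ε : ℝ => ε⁻¹ • (msqrt (B * B + ε • a) - msqrt (B * B))) (𝓝[≠] 0)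
      (𝓝 ((sylvesterEquiv hB).symm a)) := by
  obtain ⟨g, hg, hmsqrt⟩ := exists_hasFDerivAt_eventuallyEq_msqrt hB
  have hline : HasDerivAt (fun ε : ℝ => B * B + ε • a) a 0 :=
    (((hasDerivAt_id (0 : ℝ)).smul_const a).const_add (B * B)).congr_deriv (one_smul _ _)
  have hlim : Tendsto (fun ε : ℝ => B * B + ε • a) (𝓝 0) (𝓝 (B * B)) :=
    (continuous_const.add (continuous_id.smul continuous_const)).tendsto' 0 _ (by simp)
  have hBB : (B * B).IsSymm := by
    rw [IsSymm, transpose_mul, (isHermitian_iff_isSymm.mp hB.isHermitian).eq]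
  refine (hg.comp_hasDerivAt_of_eq 0 hline (by simp)).tendsto_slope.congr' ?_
  filter_upwards [nhdsWithin_le_nhds (hlim.eventually hmsqrt)] with ε hε
  rw [slope_def_module, sub_zero, Function.comp_apply, Function.comp_apply, zero_smul, add_zero,
    hε (hBB.add (ha.smul ε)), hmsqrt.self_of_nhds hBB]

end SquareRoot

/-- On the open cone of positive definite matrices, the square root map has directional
derivatives `D_{√h}(a)` in every symmetric direction `a`, and these satisfy
`|D_{√h}(a)| ≤ C |a| |h⁻¹|^{1/2}` for a constant `C` depending only on `D`. -/
theorem stmt_5 {D : ℕ} :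
    ∃ C : ℝ, 0 < C ∧
      ∀ h : Matrix (Fin D) (Fin D) ℝ, h.PosDef →
        ∀ a : Matrix (Fin D) (Fin D) ℝ, a.IsSymm →
          ∃ d : Matrix (Fin D) (Fin D) ℝ,
            Tendsto (fun ε : ℝ => ε⁻¹ • (msqrt (h + ε • a) - msqrt h)) (𝓝[≠] 0) (𝓝 d) ∧
            frob d ≤ C * frob a * Real.sqrt (frob h⁻¹) := by
  refine ⟨√D * √√D + 1, by positivity, fun h hh a ha => ?_⟩
  obtain ⟨B, hB, rfl⟩ := exists_posDef_mul_self_eq hh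
  refine ⟨_, tendsto_slope_msqrt hB ha, ?_⟩
  have hbound := calc
    frob ((sylvesterEquiv hB).symm a)
      ≤ (B⁻¹).trace * frob (sylvesterEquiv hB ((sylvesterEquiv hB).symm a)) :=
        frob_le_trace_inv_mul_frob_sylvester hB _
    _ ≤ √D * √√D * √(frob (B * B)⁻¹) * frob a := by
      rw [ContinuousLinearEquiv.apply_symm_apply]
      gcongr
      · exact frob_nonneg a
      · exact trace_inv_le_of_isSymm (isHermitian_iff_isSymm.mp hB.isHermitian)
  nlinarith [mul_nonneg (frob_nonneg a) (Real.sqrt_nonneg (frob (B * B)⁻¹))]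
end

section
/- Let ψ : S^D → ℝ be twice differentiable with bounded first and second derivatives, H : S^D → ℝ smooth, and set L = Lip(∇H ∘ ∇ψ). Define for 0 ≤ t < 1/L the map u(t,h) = U(t, Z(t,h)) where U(t,h) = ψ(h) − t ∇H(∇ψ(h))·∇ψ(h) + t H(∇ψ(h)) and Z(t,·) is the inverse of the characteristic map X(t,h) = h − t ∇H(∇ψ(h)). Then u is differentiable, satisfies ∇_h u(t,h) = ∇ψ(Z(t,h)), and solves the Hamilton–Jacobi equation ∂_t u = H(∇_h u) classically on [0, 1/L) × S^D, with u(0,·) = ψ. -/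
open Filter Topology

set_option maxHeartbeats 1000000 in
open InnerProductSpace RealInnerProductSpace Asymptotics in
/-- Short-time classical solution of the Hamilton–Jacobi equation `∂_t u = H(∇u)` by
characteristics: with `U(t,h) = ψ(h) − t ⟪∇H(∇ψ(h)), ∇ψ(h)⟫ + t H(∇ψ(h))` and `Z(t,·)`
the inverse of `X(t,h) = h − t ∇H(∇ψ(h))`, the function `u(t,h) = U(t, Z(t,h))` is
differentiable, satisfies `∇_h u(t,h) = ∇ψ(Z(t,h))`, solves the equation classically on
`[0, 1/L)`, and has initial condition `ψ`. -/
theorem stmt_9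
    {V : Type*} [NormedAddCommGroup V] [InnerProductSpace ℝ V] [FiniteDimensional ℝ V]
    (ψ H : V → ℝ)
    (hψ : ContDiff ℝ 2 ψ)
    (hψbdd : ∃ M : ℝ, ∀ h : V, ‖gradient ψ h‖ ≤ M ∧ ‖fderiv ℝ (gradient ψ) h‖ ≤ M)
    (hH : ContDiff ℝ (⊤ : ℕ∞) H)
    (L : ℝ) (hL0 : 0 ≤ L)
    (hLip : ∀ x y : V, ‖gradient H (gradient ψ x) - gradient H (gradient ψ y)‖ ≤ L * ‖x - y‖)
    (Z : ℝ → V → V)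
    (hZ : ∀ t : ℝ, 0 ≤ t → t * L < 1 →
      (∀ h : V, Z t h - t • gradient H (gradient ψ (Z t h)) = h) ∧
      (∀ h : V, Z t (h - t • gradient H (gradient ψ h)) = h) ∧
      Differentiable ℝ (Z t))
    (u : ℝ → V → ℝ)
    (hu : ∀ t h, u t h =
      ψ (Z t h) - t * inner ℝ (gradient H (gradient ψ (Z t h))) (gradient ψ (Z t h))
        + t * H (gradient ψ (Z t h))) :
    (∀ h : V, u 0 h = ψ h) ∧
    (∀ t : ℝ, 0 ≤ t → t * L < 1 → ∀ h : V,
      DifferentiableAt ℝ (u t) h ∧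
      gradient (u t) h = gradient ψ (Z t h) ∧
      HasDerivWithinAt (fun s => u s h) (H (gradient (u t) h)) (Set.Ici 0) t) := by
  set g : V → V := gradient ψ with hg_def
  set Φ : V → V := fun x => gradient H (g x) with hΦ_def
  -- smoothness facts
  have hg1 : ContDiff ℝ 1 g := by
    have : ContDiff ℝ 1 (fderiv ℝ ψ) := hψ.fderiv_right (by norm_num)
    exact ((toDual ℝ V).symm.contDiff).comp this
  have hH1 : ContDiff ℝ 1 (gradient H) := by
    have : ContDiff ℝ 1 (fderiv ℝ H) := hH.fderiv_right (by norm_cast)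
    exact ((toDual ℝ V).symm.contDiff).comp this
  have hΦ1 : ContDiff ℝ 1 Φ := hH1.comp hg1
  have hgd : Differentiable ℝ g := hg1.differentiable one_ne_zero
  have hΦd : Differentiable ℝ Φ := hΦ1.differentiable one_ne_zero
  have hψd : Differentiable ℝ ψ := hψ.differentiable (by norm_num)
  -- key gradient computation
  have key : ∀ t : ℝ, 0 ≤ t → t * L < 1 → ∀ h : V,
      HasGradientAt (u t) (g (Z t h)) h := by
    intro t ht htL h
    obtain ⟨hZ1, hZ2, hZdiff⟩ := hZ t ht htL
    set z := Z t h with hz_def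
    set B := fderiv ℝ (Z t) h with hB_def
    set A := fderiv ℝ Φ z with hA_def
    set C := fderiv ℝ g z with hC_def
    have hB : HasFDerivAt (Z t) B h := (hZdiff h).hasFDerivAt
    have hA : HasFDerivAt Φ A z := (hΦd z).hasFDerivAt
    have hC : HasFDerivAt g C z := (hgd z).hasFDerivAt
    have hψz : HasFDerivAt ψ (toDual ℝ V (g z)) z := (hψd z).hasGradientAt.hasFDerivAt
    have hHp : HasFDerivAt H (toDual ℝ V (Φ z)) (g z) :=
      ((hH.differentiable (by simp)) (g z)).hasGradientAt.hasFDerivAt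
    -- derivative of the identity Z t y - t • Φ (Z t y) = y
    have hid : ∀ v : V, B v - t • A (B v) = v := by
      have hW : HasFDerivAt (fun y => Z t y - t • Φ (Z t y)) (B - t • (A.comp B)) h :=
        hB.sub ((hA.comp h hB).const_smul t)
      have hWe : (fun y => Z t y - t • Φ (Z t y)) = fun y => y := funext fun y => hZ1 y
      rw [hWe] at hW
      have := hW.unique (hasFDerivAt_id h)
      intro v
      have hv := congrArg (fun (T : V →L[ℝ] V) => T v) this
      simpa using hv
    have hG : HasFDerivAt (fun x => ψ x - t * ⟪Φ x, g x⟫_ℝ + t * H (g x))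
        ((toDual ℝ V (g z) - t • ((fderivInnerCLM ℝ (Φ z, g z)).comp (A.prod C)))
          + t • ((toDual ℝ V (Φ z)).comp C)) z :=
      (hψz.sub ((hA.inner ℝ hC).const_mul t)).add ((hHp.comp z hC).const_mul t)
    have hcomp : HasFDerivAt (fun y => ψ (Z t y) - t * ⟪Φ (Z t y), g (Z t y)⟫_ℝ
        + t * H (g (Z t y)))
        ((((toDual ℝ V (g z) - t • ((fderivInnerCLM ℝ (Φ z, g z)).comp (A.prod C)))
          + t • ((toDual ℝ V (Φ z)).comp C)).comp B)) h := hG.comp h hB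
    have hueq : (u t) = fun y => ψ (Z t y) - t * ⟪Φ (Z t y), g (Z t y)⟫_ℝ + t * H (g (Z t y)) :=
      funext fun y => hu t y
    have hDeq : (((toDual ℝ V (g z) - t • ((fderivInnerCLM ℝ (Φ z, g z)).comp (A.prod C)))
          + t • ((toDual ℝ V (Φ z)).comp C)).comp B) = toDual ℝ V (g z) := by
      ext v
      have h1 : t • A (B v) = B v - v := eq_sub_of_add_eq' (sub_eq_iff_eq_add.mp (hid v)).symm
      have h2 : t * ⟪A (B v), g z⟫_ℝ = ⟪B v, g z⟫_ℝ - ⟪v, g z⟫_ℝ := by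
        rw [← real_inner_smul_left, h1, inner_sub_left]
      simp only [ContinuousLinearMap.coe_comp', Function.comp_apply,
        ContinuousLinearMap.add_apply, ContinuousLinearMap.coe_sub',
        ContinuousLinearMap.coe_smul', Pi.sub_apply, Pi.smul_apply, smul_eq_mul,
        fderivInnerCLM_apply, ContinuousLinearMap.prod_apply, toDual_apply_apply]
      linear_combination -h2 + real_inner_comm (B v) (g z) - real_inner_comm v (g z)
    rw [hasGradientAt_iff_hasFDerivAt, hueq, ← hDeq]
    exact hcomp
  constructor
  · intro h
    have h0 := (hZ 0 le_rfl (by norm_num)).1 h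
    have hZ0 : Z 0 h = h := by simpa using h0
    rw [hu 0 h, hZ0]; ring
  · intro t ht htL h
    have hk := key t ht htL h
    have hgrad : gradient (u t) h = g (Z t h) := hk.gradient
    refine ⟨hk.hasFDerivAt.differentiableAt, hgrad, ?_⟩
    rw [hgrad]
    obtain ⟨hZ1, hZ2, hZdiff⟩ := hZ t ht htL
    set z := Z t h with hz_def
    set r : ℝ := (t * L + 1) / 2 with hr_def
    have htL0 : 0 ≤ t * L := mul_nonneg ht hL0
    have htr : t * L < r := by rw [hr_def]; linarith
    have hr1 : r < 1 := by rw [hr_def]; linarith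
    have hr0 : 0 ≤ r := by rw [hr_def]; linarith
    have h1r : 0 < 1 - r := by linarith
    obtain ⟨δ, hδ0, hδ⟩ : ∃ δ > 0, ∀ s : ℝ, |s - t| < δ → s * L ≤ r := by
      rcases eq_or_lt_of_le hL0 with hL | hL
      · exact ⟨1, one_pos, fun s _ => by rw [← hL, mul_zero]; exact hr0⟩
      · refine ⟨(r - t * L) / L, div_pos (by linarith) hL, fun s hs => ?_⟩
        have h1 : s ≤ t + (r - t * L) / L := by
          have := (abs_lt.mp hs).2; linarith
        have h2 : s * L ≤ (t + (r - t * L) / L) * L :=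
          mul_le_mul_of_nonneg_right h1 hL.le
        have h3 : (t + (r - t * L) / L) * L = r := by field_simp; ring
        linarith
    have hev : ∀ᶠ s in 𝓝[Set.Ici (0:ℝ) \ {t}] t, (0 ≤ s ∧ s ≠ t) ∧ |s - t| < δ := by
      have h1 : ∀ᶠ s in 𝓝[Set.Ici (0:ℝ) \ {t}] t, s ∈ Set.Ici (0:ℝ) \ {t} :=
        eventually_mem_nhdsWithin
      have h2 : ∀ᶠ s in 𝓝 t, |s - t| < δ := by
        filter_upwards [Metric.ball_mem_nhds t hδ0] with s hs
        simpa [Real.dist_eq] using hs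
      filter_upwards [h1, h2.filter_mono nhdsWithin_le_nhds] with s hs1 hs2
      exact ⟨⟨hs1.1, hs1.2⟩, hs2⟩
    have hzs : ∀ s : ℝ, 0 ≤ s → s * L ≤ r → ‖Z s h - z‖ ≤ ‖Φ z‖ / (1 - r) * |s - t| := by
      intro s hs0 hsr
      have hsL : s * L < 1 := lt_of_le_of_lt hsr hr1
      have e1 : Z s h - s • Φ (Z s h) = h := (hZ s hs0 hsL).1 h
      have e2 : z - t • Φ z = h := hZ1 h
      have e3 : Z s h - z = s • (Φ (Z s h) - Φ z) + (s - t) • Φ z := by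
        rw [sub_eq_iff_eq_add] at e1 e2
        calc Z s h - z = (h + s • Φ (Z s h)) - (h + t • Φ z) := by rw [← e1, ← e2]
          _ = s • (Φ (Z s h) - Φ z) + (s - t) • Φ z := by
              rw [smul_sub, sub_smul]; abel
      have hLip' : ‖Φ (Z s h) - Φ z‖ ≤ L * ‖Z s h - z‖ := hLip (Z s h) z
      have e4 : ‖Z s h - z‖ ≤ s * (L * ‖Z s h - z‖) + |s - t| * ‖Φ z‖ := by
        calc ‖Z s h - z‖ = ‖s • (Φ (Z s h) - Φ z) + (s - t) • Φ z‖ := congrArg norm e3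
          _ ≤ ‖s • (Φ (Z s h) - Φ z)‖ + ‖(s - t) • Φ z‖ := norm_add_le _ _
          _ = s * ‖Φ (Z s h) - Φ z‖ + |s - t| * ‖Φ z‖ := by
              rw [norm_smul, norm_smul, Real.norm_eq_abs, Real.norm_eq_abs, abs_of_nonneg hs0]
          _ ≤ s * (L * ‖Z s h - z‖) + |s - t| * ‖Φ z‖ := by
              have := mul_le_mul_of_nonneg_left hLip' hs0
              linarith
      have e5 : s * (L * ‖Z s h - z‖) ≤ r * ‖Z s h - z‖ := by
        rw [← mul_assoc]; exact mul_le_mul_of_nonneg_right hsr (norm_nonneg _)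
      have e6 : (1 - r) * ‖Z s h - z‖ ≤ |s - t| * ‖Φ z‖ := by nlinarith
      rw [div_mul_eq_mul_div, le_div_iff₀ h1r]
      nlinarith
    set C2 : ℝ := ‖Φ z‖ / (1 - r) with hC2_def
    have hC2 : 0 ≤ C2 := by positivity
    set K : ℝ := ‖Φ z‖ + L * (C2 * δ) with hK_def
    set w : ℝ → V := fun s => (s - t) • Φ (Z s h) with hw_def
    have hwb : ∀ᶠ s in 𝓝[Set.Ici (0:ℝ) \ {t}] t, ‖w s‖ ≤ K * |s - t| := by
      filter_upwards [hev] with s hs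
      obtain ⟨⟨hs0, hst⟩, hsδ⟩ := hs
      have hb := hzs s hs0 (hδ s hsδ)
      have h2 : ‖Z s h - z‖ ≤ C2 * δ :=
        hb.trans (mul_le_mul_of_nonneg_left hsδ.le hC2)
      have hΦb : ‖Φ (Z s h)‖ ≤ K := by
        have h1 : ‖Φ (Z s h) - Φ z‖ ≤ L * ‖Z s h - z‖ := hLip (Z s h) z
        have h3 : L * ‖Z s h - z‖ ≤ L * (C2 * δ) := mul_le_mul_of_nonneg_left h2 hL0
        calc ‖Φ (Z s h)‖ = ‖Φ z + (Φ (Z s h) - Φ z)‖ := by rw [add_sub_cancel]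
          _ ≤ ‖Φ z‖ + ‖Φ (Z s h) - Φ z‖ := norm_add_le _ _
          _ ≤ K := by rw [hK_def]; linarith
      rw [hw_def]
      calc ‖(s - t) • Φ (Z s h)‖ = |s - t| * ‖Φ (Z s h)‖ := by
            rw [norm_smul, Real.norm_eq_abs]
        _ ≤ |s - t| * K := mul_le_mul_of_nonneg_left hΦb (abs_nonneg _)
        _ = K * |s - t| := mul_comm _ _
    have hKabs : Tendsto (fun s : ℝ => K * |s - t|) (𝓝[Set.Ici (0:ℝ) \ {t}] t) (𝓝 0) := by
      have : Tendsto (fun s : ℝ => K * |s - t|) (𝓝 t) (𝓝 (K * |t - t|)) :=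
        Continuous.tendsto (continuous_const.mul ((continuous_id.sub continuous_const).abs)) t
      simpa using this.mono_left nhdsWithin_le_nhds
    have hwt : Tendsto w (𝓝[Set.Ici (0:ℝ) \ {t}] t) (𝓝 0) :=
      squeeze_zero_norm' hwb hKabs
    have hC2abs : Tendsto (fun s : ℝ => C2 * |s - t|) (𝓝[Set.Ici (0:ℝ) \ {t}] t) (𝓝 0) := by
      have : Tendsto (fun s : ℝ => C2 * |s - t|) (𝓝 t) (𝓝 (C2 * |t - t|)) :=
        Continuous.tendsto (continuous_const.mul ((continuous_id.sub continuous_const).abs)) t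
      simpa using this.mono_left nhdsWithin_le_nhds
    have hzt : Tendsto (fun s => Z s h) (𝓝[Set.Ici (0:ℝ) \ {t}] t) (𝓝 z) := by
      have hb : ∀ᶠ s in 𝓝[Set.Ici (0:ℝ) \ {t}] t, ‖Z s h - z‖ ≤ C2 * |s - t| := by
        filter_upwards [hev] with s hs
        exact hzs s hs.1.1 (hδ s hs.2)
      have h0 : Tendsto (fun s => Z s h - z) (𝓝[Set.Ici (0:ℝ) \ {t}] t) (𝓝 0) :=
        squeeze_zero_norm' hb hC2abs
      have h1 := h0.add (tendsto_const_nhds (x := z))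
      rw [zero_add] at h1
      exact h1.congr (fun s => sub_add_cancel _ _)
    -- little-o term
    set f' : V →L[ℝ] ℝ := toDual ℝ V (g z) with hf'_def
    have hf : HasFDerivAt (u t) f' h := (key t ht htL h).hasFDerivAt
    set E : ℝ → ℝ := fun s => u t (h + w s) - u t h - f' (w s) with hE_def
    have hE0 : (fun s => E s) =o[𝓝[Set.Ici (0:ℝ) \ {t}] t] (fun s => w s) :=
      (hasFDerivAt_iff_isLittleO_nhds_zero.mp hf).comp_tendsto hwt
    have hWO : (fun s => w s) =O[𝓝[Set.Ici (0:ℝ) \ {t}] t] (fun s => s - t) :=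
      Asymptotics.IsBigO.of_bound K (by
        filter_upwards [hwb] with s hs
        simpa [Real.norm_eq_abs] using hs)
    have htend0 : Tendsto (fun s => E s / (s - t)) (𝓝[Set.Ici (0:ℝ) \ {t}] t) (𝓝 0) :=
      (hE0.trans_isBigO hWO).tendsto_div_nhds_zero
    -- continuous term
    set q : ℝ → ℝ := fun s => ⟪g z, Φ (Z s h)⟫_ℝ
      + (H (g (Z s h)) - ⟪Φ (Z s h), g (Z s h)⟫_ℝ) with hq_def
    have hqt : Tendsto q (𝓝[Set.Ici (0:ℝ) \ {t}] t) (𝓝 (H (g z))) := by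
      have hQ : Continuous fun x : V => ⟪g z, Φ x⟫_ℝ + (H (g x) - ⟪Φ x, g x⟫_ℝ) := by
        have hgc : Continuous g := hg1.continuous
        have hΦc : Continuous Φ := hΦ1.continuous
        have hHc : Continuous H := hH.continuous
        exact (continuous_const.inner hΦc).add ((hHc.comp hgc).sub (hΦc.inner hgc))
      have := (hQ.tendsto z).comp hzt
      have hval : ⟪g z, Φ z⟫_ℝ + (H (g z) - ⟪Φ z, g z⟫_ℝ) = H (g z) := by
        rw [real_inner_comm]; ring
      rw [hval] at this
      exact this
    -- identity for the slope
    have hiden : ∀ s : ℝ, 0 ≤ s → s * L < 1 →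
        u s h = u t (h + w s) + (s - t) * (H (g (Z s h)) - ⟪Φ (Z s h), g (Z s h)⟫_ℝ) := by
      intro s hs0 hsL
      have e1 : Z s h - s • Φ (Z s h) = h := (hZ s hs0 hsL).1 h
      have e2 : h + (s - t) • Φ (Z s h) = Z s h - t • Φ (Z s h) :=
        calc h + (s - t) • Φ (Z s h)
            = (Z s h - s • Φ (Z s h)) + (s - t) • Φ (Z s h) := by rw [e1]
          _ = Z s h - t • Φ (Z s h) := by rw [sub_smul]; abel
      have e3 : Z t (h + w s) = Z s h := by
        show Z t (h + (s - t) • Φ (Z s h)) = Z s h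
        rw [e2]; exact hZ2 (Z s h)
      rw [hu s h, hu t (h + w s), e3]
      ring
    have heq : ∀ᶠ s in 𝓝[Set.Ici (0:ℝ) \ {t}] t,
        slope (fun s => u s h) t s = E s / (s - t) + q s := by
      filter_upwards [hev] with s hs
      obtain ⟨⟨hs0, hst⟩, hsδ⟩ := hs
      have hsL : s * L < 1 := lt_of_le_of_lt (hδ s hsδ) hr1
      have hne : s - t ≠ 0 := sub_ne_zero.mpr hst
      have hfw : f' (w s) = (s - t) * ⟪g z, Φ (Z s h)⟫_ℝ := by
        rw [hf'_def, hw_def]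
        simp [real_inner_smul_right]
      have husw : u t (h + w s) = E s + u t h + (s - t) * ⟪g z, Φ (Z s h)⟫_ℝ := by
        rw [hE_def]; simp only; rw [hfw]; ring
      rw [slope_def_field, hiden s hs0 hsL, husw, hq_def]
      field_simp
      ring
    rw [hasDerivWithinAt_iff_tendsto_slope]
    have hfinal : Tendsto (fun s => E s / (s - t) + q s)
        (𝓝[Set.Ici (0:ℝ) \ {t}] t) (𝓝 (0 + H (g z))) := htend0.add hqt
    rw [zero_add] at hfinal
    exact Filter.Tendsto.congr' (Filter.EventuallyEq.symm heq) hfinal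
end

section
/- (Concentration from differentiability, abstract form) Let (G_N)_{N∈ℕ} be differentiable convex functions on an open interval I ⊂ ℝ, converging pointwise to f : I → ℝ. Suppose for each N there is a random variable ℓ_N with G_N''(s) ≥ c·N·Var_N(ℓ_N)(s) − C for all s ∈ I, where Var_N(ℓ_N)(s) ≥ 0. If f is differentiable at a point s₀ in the interior of I, then liminf over shrinking intervals yields lim_{r→0} limsup_{N→∞} N ∫_{s₀}^{s₀+r} Var_N(ℓ_N)(s) ds ≤ 0; i.e., N·Var_N(ℓ_N) → 0 in an averaged sense near s₀. -/
/-!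
Integrating `G_N'' ≥ c N Var_N − C` over `[s₀, s₀ + r]` bounds `c N ∫ Var_N` by
`G_N'(s₀ + r) − G_N'(s₀) + C r`. By convexity, this increment of `G_N'` is at most the
difference of the chord slopes of `G_N` over `[s₀ + r, s₀ + 2r]` and `[s₀ − r, s₀]`; as `N → ∞`
that converges to the same difference for `f`, which tends to `0` with `r` because `f` is
differentiable at `s₀`.
-/

open Filter Topology MeasureTheory Set

noncomputable def slopeSpread (g : ℝ → ℝ) (x r : ℝ) : ℝ :=
  slope g (x + r) (x + 2 * r) - slope g (x - r) x

lemma ConvexOn.deriv_add_sub_deriv_le_slopeSpread {I : Set ℝ} {g : ℝ → ℝ}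
    (hg : ConvexOn ℝ I g) {x r : ℝ} (hr : 0 < r) (hsub : Icc (x - r) (x + 2 * r) ⊆ I)
    (hdx : DifferentiableAt ℝ g x) (hdxr : DifferentiableAt ℝ g (x + r)) :
    deriv g (x + r) - deriv g x ≤ slopeSpread g x r := by
  have mem : ∀ y, x - r ≤ y → y ≤ x + 2 * r → y ∈ I := fun y h₁ h₂ => hsub ⟨h₁, h₂⟩
  have right := hg.deriv_le_slope (mem _ (by linarith) (by linarith))
    (mem _ (by linarith) le_rfl) (by linarith) hdxr
  have left := hg.slope_le_deriv (mem _ le_rfl (by linarith))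
    (mem _ (by linarith) (by linarith)) (by linarith) hdx
  unfold slopeSpread
  linarith

lemma HasDerivAt.tendsto_slope_const_mul {f : ℝ → ℝ} {f' x : ℝ} (hf : HasDerivAt f f' x)
    (k : ℝ) :
    Tendsto (fun r => r⁻¹ * (f (x + k * r) - f x)) (𝓝[≠] 0) (𝓝 (k * f')) := by
  have hline : HasDerivAt (fun r : ℝ => x + k * r) k 0 := by
    simpa using ((hasDerivAt_id (0 : ℝ)).const_mul k).const_add x
  have hcomp : HasDerivAt (fun r => f (x + k * r)) (f' * k) 0 :=
    HasDerivAt.comp (0 : ℝ) (by simpa using hf) hline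
  simpa [mul_comm k] using hasDerivAt_iff_tendsto_slope_zero.mp hcomp

lemma DifferentiableAt.tendsto_slopeSpread {f : ℝ → ℝ} {x : ℝ} (hf : DifferentiableAt ℝ f x) :
    Tendsto (slopeSpread f x) (𝓝[≠] 0) (𝓝 0) := by
  have h := ((hf.hasDerivAt.tendsto_slope_const_mul 2).sub
    (hf.hasDerivAt.tendsto_slope_const_mul 1)).add (hf.hasDerivAt.tendsto_slope_const_mul (-1))
  rw [show 2 * deriv f x - 1 * deriv f x + -1 * deriv f x = 0 by ring] at h
  -- `slopeSpread f x r = 2 q (2r) - q r + q (-r)` with `q t = t⁻¹ (f (x + t) - f x)`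
  refine h.congr' (eventually_nhdsWithin_of_forall fun r (hr : r ≠ 0) => ?_)
  simp only [slopeSpread, slope_def_field]
  rw [show x + 2 * r - (x + r) = r by ring, show x - (x - r) = r by ring, one_mul, neg_one_mul,
    ← sub_eq_add_neg]
  ring

lemma tendsto_slopeSpread {α : Type*} {l : Filter α} {G : α → ℝ → ℝ} {f : ℝ → ℝ} {x r : ℝ}
    (hlim : ∀ y ∈ ({x - r, x, x + r, x + 2 * r} : Set ℝ),
      Tendsto (fun n => G n y) l (𝓝 (f y))) :
    Tendsto (fun n => slopeSpread (G n) x r) l (𝓝 (slopeSpread f x r)) := by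
  simp only [slopeSpread, slope_def_field]
  exact ((((hlim _ (by simp)).sub (hlim _ (by simp))).div_const _).sub
    (((hlim _ (by simp)).sub (hlim _ (by simp))).div_const _))

lemma ContDiffOn.setIntegral_Ioc_deriv_deriv {I : Set ℝ} (hI : IsOpen I) {g : ℝ → ℝ}
    (hg : ContDiffOn ℝ 2 g I) {a b : ℝ} (hab : a ≤ b) (hsub : Icc a b ⊆ I) :
    IntegrableOn (deriv (deriv g)) (Ioc a b) ∧
      ∫ s in Ioc a b, deriv (deriv g) s = deriv g b - deriv g a := by
  have hg' : ContDiffOn ℝ 1 (deriv g) I := hg.deriv_of_isOpen hI (by norm_num)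
  have hcont : ContinuousOn (deriv (deriv g)) (Icc a b) :=
    (hg'.continuousOn_deriv_of_isOpen hI le_rfl).mono hsub
  refine ⟨hcont.integrableOn_Icc.mono_set Ioc_subset_Icc_self, ?_⟩
  rw [← intervalIntegral.integral_of_le hab]
  refine intervalIntegral.integral_deriv_eq_sub (fun y hy => ?_) ?_
  · rw [uIcc_of_le hab] at hy
    exact (hg'.differentiableOn one_ne_zero).differentiableAt (hI.mem_nhds (hsub hy))
  · exact (hcont.mono (uIcc_of_le hab).subset).intervalIntegrable

lemma ContDiffOn.setIntegral_Ioc_le_of_sub_le_deriv_deriv {I : Set ℝ} (hI : IsOpen I)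
    {g : ℝ → ℝ} (hg : ContDiffOn ℝ 2 g I) {a b : ℝ} (hab : a ≤ b) (hsub : Icc a b ⊆ I)
    {u : ℝ → ℝ} {K : ℝ}
    (hu : ∀ s ∈ Ioc a b, 0 ≤ u s) (hlow : ∀ s ∈ Ioc a b, u s - K ≤ deriv (deriv g) s) :
    ∫ s in Ioc a b, u s ≤ deriv g b - deriv g a + K * (b - a) := by
  obtain ⟨hint, hftc⟩ := hg.setIntegral_Ioc_deriv_deriv hI hab hsub
  have hK : IntegrableOn (fun _ => K) (Ioc a b) := integrableOn_const measure_Ioc_lt_top.ne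
  -- No integrability of `u` is needed: it is squeezed between `0` and an integrable function.
  calc ∫ s in Ioc a b, u s ≤ ∫ s in Ioc a b, (deriv (deriv g) s + K) :=
        integral_mono_of_nonneg ((ae_restrict_iff' measurableSet_Ioc).2 (ae_of_all _ hu))
          (hint.add hK)
          ((ae_restrict_iff' measurableSet_Ioc).2 <|
            ae_of_all _ fun s hs => by linarith [hlow s hs])
    _ = deriv g b - deriv g a + K * (b - a) := by
        rw [integral_add hint hK, hftc, setIntegral_const, Measure.real, Real.volume_Ioc,
          ENNReal.toReal_ofReal (sub_nonneg.2 hab), smul_eq_mul, mul_comm]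

lemma ContDiffOn.setIntegral_Ioc_le_slopeSpread {I : Set ℝ} (hI : IsOpen I) {g : ℝ → ℝ}
    (hg : ContDiffOn ℝ 2 g I) (hconv : ConvexOn ℝ I g) {x r : ℝ} (hr : 0 < r)
    (hsub : Icc (x - r) (x + 2 * r) ⊆ I) {u : ℝ → ℝ} {K : ℝ}
    (hu : ∀ s ∈ Ioc x (x + r), 0 ≤ u s)
    (hlow : ∀ s ∈ Ioc x (x + r), u s - K ≤ deriv (deriv g) s) :
    ∫ s in Ioc x (x + r), u s ≤ slopeSpread g x r + K * r := by
  have hdiff : ∀ y ∈ Icc (x - r) (x + 2 * r), DifferentiableAt ℝ g y := fun y hy =>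
    (hg.differentiableOn (by norm_num)).differentiableAt (hI.mem_nhds (hsub hy))
  have hFTC := hg.setIntegral_Ioc_le_of_sub_le_deriv_deriv hI (by linarith)
    ((Icc_subset_Icc (by linarith) (by linarith)).trans hsub) hu hlow
  have hslope := hconv.deriv_add_sub_deriv_le_slopeSpread hr hsub
    (hdiff x ⟨by linarith, by linarith⟩) (hdiff (x + r) ⟨by linarith, by linarith⟩)
  rw [add_sub_cancel_left] at hFTC
  linarith

theorem stmt_12_general
    (I : Set ℝ) (hIopen : IsOpen I)
    (G : ℕ → ℝ → ℝ) (f : ℝ → ℝ) (V : ℕ → ℝ → ℝ) (c C : ℝ) (hc : 0 < c)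
    (hGC2 : ∀ N, ContDiffOn ℝ 2 (G N) I)
    (hGconv : ∀ N, ConvexOn ℝ I (G N))
    (hV0 : ∀ N s, 0 ≤ V N s)
    (hlower : ∀ N, ∀ s ∈ I, c * N * V N s - C ≤ deriv (deriv (G N)) s)
    (hlim : ∀ s ∈ I, Tendsto (fun N => G N s) atTop (𝓝 (f s)))
    (s₀ : ℝ) (hs₀ : s₀ ∈ I) (hf : DifferentiableAt ℝ f s₀) :
    ∀ ε : ℝ, 0 < ε → ∃ r₀ : ℝ, 0 < r₀ ∧ ∀ r : ℝ, 0 < r → r < r₀ →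
      limsup (fun N : ℕ => (N : ℝ) * ∫ s in Set.Ioc s₀ (s₀ + r), V N s) atTop ≤ ε := by
  intro ε hε
  obtain ⟨δ, hδ, hball⟩ := Metric.isOpen_iff.mp hIopen s₀ hs₀
  have hspread : Tendsto (fun r => (slopeSpread f s₀ r + C * r) / c) (𝓝[>] 0) (𝓝 0) := by
    have hCr : Tendsto (fun r => C * r) (𝓝[>] 0) (𝓝 (C * 0)) :=
      (continuous_const_mul C).continuousWithinAt
    simpa using ((hf.tendsto_slopeSpread.mono_left (nhdsGT_le_nhdsNE 0)).add hCr).div_const c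
  obtain ⟨r₀, hr₀, hsmall⟩ := mem_nhdsGT_iff_exists_Ioo_subset.mp <|
    (hspread.eventually (gt_mem_nhds hε)).and (Ioo_mem_nhdsGT (half_pos hδ))
  refine ⟨r₀, hr₀, fun r hr hrr₀ => ?_⟩
  obtain ⟨hlt, -, hrδ⟩ := hsmall ⟨hr, hrr₀⟩
  have hsub : Icc (s₀ - r) (s₀ + 2 * r) ⊆ I := fun y hy => hball <| by
    rw [Real.ball_eq_Ioo]; exact ⟨by linarith [hy.1], by linarith [hy.2]⟩
  have hbound (N : ℕ) :
      (N : ℝ) * ∫ s in Ioc s₀ (s₀ + r), V N s ≤ (slopeSpread (G N) s₀ r + C * r) / c := by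
    have := (hGC2 N).setIntegral_Ioc_le_slopeSpread hIopen (hGconv N) hr hsub
      (u := fun s => c * N * V N s) (fun s _ => by have := hV0 N s; positivity)
      (fun s hs => hlower N s (hsub ⟨by linarith [hs.1], by linarith [hs.2]⟩))
    rw [integral_const_mul] at this
    rw [le_div_iff₀ hc]
    linarith
  have hspreadN := tendsto_slopeSpread (l := atTop) (x := s₀) (r := r) fun y hy => hlim y <|
    hsub (by rcases hy with rfl | rfl | rfl | rfl <;> constructor <;> linarith)
  refine limsup_le_of_le (isCoboundedUnder_le_of_le atTop (x := 0) fun N => ?_) ?_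
  · exact mul_nonneg N.cast_nonneg (setIntegral_nonneg measurableSet_Ioc fun s _ => hV0 N s)
  · filter_upwards [((hspreadN.add_const (C * r)).div_const c).eventually (gt_mem_nhds hlt)]
      with N hN using (hbound N).trans hN.le

/-- Abstract concentration from differentiability: convex `C²` functions `G_N` converging
pointwise to `f` on an open interval, with `G_N'' ≥ c N Var_N − C`, force the averaged
variances `N ∫_{s₀}^{s₀+r} Var_N` to vanish near any differentiability point `s₀` of `f`. -/
theorem stmt_12
    (I : Set ℝ) (hIopen : IsOpen I) (hIconv : Convex ℝ I)
    (G : ℕ → ℝ → ℝ) (f : ℝ → ℝ) (V : ℕ → ℝ → ℝ) (c C : ℝ) (hc : 0 < c) (hC : 0 < C)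
    (hGC2 : ∀ N, ContDiffOn ℝ 2 (G N) I)
    (hGconv : ∀ N, ConvexOn ℝ I (G N))
    (hV0 : ∀ N s, 0 ≤ V N s)
    (hVmeas : ∀ N, Measurable (V N))
    (hlower : ∀ N, ∀ s ∈ I, c * N * V N s - C ≤ deriv (deriv (G N)) s)
    (hlim : ∀ s ∈ I, Tendsto (fun N => G N s) atTop (𝓝 (f s)))
    (s₀ : ℝ) (hs₀ : s₀ ∈ I) (hf : DifferentiableAt ℝ f s₀) :
    ∀ ε : ℝ, 0 < ε → ∃ r₀ : ℝ, 0 < r₀ ∧ ∀ r : ℝ, 0 < r → r < r₀ →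
      limsup (fun N : ℕ => (N : ℝ) * ∫ s in Set.Ioc s₀ (s₀ + r), V N s) atTop ≤ ε :=
  stmt_12_general I hIopen G f V c C hc hGC2 hGconv hV0 hlower hlim s₀ hs₀ hf
end

section
/- Let X be an ℝ^{N×D}-valued random matrix whose N rows are i.i.d. copies of a random row vector X₁ ∈ ℝ^{1×D} with entries in [−1,1]. Fix p ∈ ℕ and A ∈ ℝ^{D^p × L}. Then N^{-p} E|X^{⊗p} A|² → (A Aᵀ) · (E[X₁ᵀ X₁])^{⊗p} as N → ∞, where X^{⊗p} is the p-fold Kronecker power of X viewed as an N^p × D^p matrix and |·| is the Frobenius norm. -/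
/-!
Expanding the square, `N^{-p} E|X^{⊗p} A|²` is the pairing of `A Aᵀ` with the normalised Gram
matrix `N^{-p} E[(X^{⊗p})ᵀ X^{⊗p}]`, whose `(d, d')` entry averages
`E ∏ᵢ X_{nᵢ dᵢ} X_{nᵢ d'ᵢ}` over all row multi-indices `n`. When `n` is injective the factors
read distinct, independent rows, so the expectation is `∏ᵢ E[X_{1 dᵢ} X_{1 d'ᵢ}]`, the `(d, d')`
entry of `(E[X₁ᵀ X₁])^{⊗p}`. All other terms lie in `[-1, 1]`, and there are only
`N^p - N(N-1)⋯(N-p+1) = o(N^p)` of them.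
-/

open Filter Topology MeasureTheory

/-- `p`-fold Kronecker tensor power of a `D × D` matrix, indexed by `p`-tuples. -/
noncomputable def kpowD {D : ℕ} (p : ℕ) (q : Matrix (Fin D) (Fin D) ℝ) :
    Matrix (Fin p → Fin D) (Fin p → Fin D) ℝ :=
  fun d d' => ∏ i, q (d i) (d' i)

/-- `p`-fold Kronecker tensor power of an `N × D` matrix, viewed as an `N^p × D^p` matrix. -/
noncomputable def kpowX {N D : ℕ} (p : ℕ) (x : Fin N → Fin D → ℝ) :
    Matrix (Fin p → Fin N) (Fin p → Fin D) ℝ :=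
  fun n d => ∏ i, x (n i) (d i)

open Finset Function
open scoped Matrix

theorem card_filter_not_injective (p N : ℕ) :
    (#{n : Fin p → Fin N | ¬Injective n} : ℝ) = N ^ p - N.descFactorial p := by
  have h_inj : #{n : Fin p → Fin N | Injective n} = N.descFactorial p := by
    rw [← Fintype.card_subtype, Fintype.card_congr (Equiv.subtypeInjectiveEquivEmbedding _ _),
      Fintype.card_embedding_eq, Fintype.card_fin, Fintype.card_fin]
  have h_all := card_filter_add_card_filter_not (s := (univ : Finset (Fin p → Fin N))) Injective
  rw [h_inj, card_univ, Fintype.card_fun, Fintype.card_fin, Fintype.card_fin] at h_all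
  rw [eq_sub_iff_add_eq']
  exact_mod_cast h_all

theorem tendsto_card_filter_not_injective_div_pow (p : ℕ) :
    Tendsto (fun N : ℕ => (#{n : Fin p → Fin N | ¬Injective n} : ℝ) / N ^ p) atTop (𝓝 0) := by
  have h := (isEquivalent_descFactorial p).isLittleO.tendsto_div_nhds_zero.neg
  simp only [neg_zero] at h
  refine h.congr fun N => ?_
  rw [card_filter_not_injective]
  simp only [Pi.sub_apply]
  ring

theorem tendsto_inv_pow_mul_sum_of_eq_on_injective {p : ℕ} {C Q : ℝ}
    (F : ∀ N : ℕ, (Fin p → Fin N) → ℝ) (hF : ∀ N n, |F N n| ≤ C)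
    (hQ : ∀ N n, Injective n → F N n = Q) :
    Tendsto (fun N : ℕ => ((N : ℝ) ^ p)⁻¹ * ∑ n, F N n) atTop (𝓝 Q) := by
  rw [← tendsto_sub_nhds_zero_iff]
  have h_err : ∀ N : ℕ, 0 < N → ((N : ℝ) ^ p)⁻¹ * ∑ n, F N n - Q
      = ((N : ℝ) ^ p)⁻¹ * ∑ n with ¬Injective n, (F N n - Q) := by
    intro N hN
    have hNp : (N : ℝ) ^ p ≠ 0 := by positivity
    have h_inj : ∀ n ∈ univ, F N n - Q ≠ 0 → ¬Injective n := fun n _ h hn =>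
      h (by rw [hQ N n hn, sub_self])
    rw [sum_filter_of_ne h_inj, sum_sub_distrib, sum_const, card_univ, Fintype.card_fun,
      Fintype.card_fin, Fintype.card_fin, nsmul_eq_mul, mul_sub]
    push_cast
    rw [inv_mul_cancel_left₀ hNp]
  have h_bound : ∀ N : ℕ, 0 < N → ‖((N : ℝ) ^ p)⁻¹ * ∑ n, F N n - Q‖
      ≤ (#{n : Fin p → Fin N | ¬Injective n} : ℝ) / N ^ p * (C + |Q|) := by
    intro N hN
    rw [h_err N hN, norm_mul, norm_inv, norm_pow, Real.norm_natCast, div_eq_inv_mul, mul_assoc]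
    gcongr
    calc ‖∑ n with ¬Injective n, (F N n - Q)‖
        ≤ ∑ n with ¬Injective n, (C + |Q|) :=
          norm_sum_le_of_le _ fun n _ => (abs_sub _ _).trans (add_le_add_left (hF N n) _)
      _ = _ := by rw [sum_const, nsmul_eq_mul]
  refine squeeze_zero_norm' (eventually_atTop.2 ⟨1, h_bound⟩) ?_
  simpa using (tendsto_card_filter_not_injective_div_pow p).mul_const (C + |Q|)

theorem ae_pi_forall_of_ae {α κ : Type*} [Fintype κ] [MeasurableSpace α] {ν : Measure α}
    [SigmaFinite ν] {P : α → Prop} (h : ∀ᵐ y ∂ν, P y) :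
    ∀ᵐ x ∂Measure.pi (fun _ : κ => ν), ∀ m, P (x m) :=
  ae_all_iff.2 fun _ => Measure.tendsto_eval_ae_ae.eventually h

theorem integral_prod_comp_of_injective {ι κ α : Type*} [Fintype ι] [Fintype κ]
    [DecidableEq κ] [MeasurableSpace α] (ν : Measure α) [IsProbabilityMeasure ν] {n : ι → κ}
    (hn : Injective n) (f : ι → α → ℝ) :
    ∫ x, ∏ i, f i (x (n i)) ∂Measure.pi (fun _ : κ => ν) = ∏ i, ∫ y, f i y ∂ν := by
  have h_fiber : ∀ m, ∫ y, ∏ i with n i = m, f i y ∂ν = ∏ i with n i = m, ∫ y, f i y ∂ν := by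
    intro m
    rcases ({i | n i = m} : Finset ι).eq_empty_or_nonempty with h | ⟨i, hi⟩
    · simp [h]
    · have : ({i | n i = m} : Finset ι) = {i} := by
        ext j
        simp only [mem_filter, mem_univ, true_and, mem_singleton] at hi ⊢
        rw [← hi, hn.eq_iff]
      simp [this]
  -- group the factors by the coordinate of `x` they read; by injectivity each group has ≤ 1 factor
  calc ∫ x, ∏ i, f i (x (n i)) ∂Measure.pi (fun _ : κ => ν)
      = ∫ x, ∏ m, ∏ i with n i = m, f i (x m) ∂Measure.pi (fun _ : κ => ν) := by
        congr with x
        rw [← prod_fiberwise univ n]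
        exact prod_congr rfl fun m _ => prod_congr rfl fun i hi => by rw [(mem_filter.1 hi).2]
    _ = ∏ m, ∫ y, ∏ i with n i = m, f i y ∂ν :=
        integral_fintype_prod_eq_prod (𝕜 := ℝ) fun m y => ∏ i with n i = m, f i y
    _ = ∏ i, ∫ y, f i y ∂ν := by rw [prod_congr rfl fun m _ => h_fiber m, prod_fiberwise]

theorem sum_sq_mul_apply_eq_dotpG {m k l : Type*} [Fintype m] [Fintype k] [Fintype l]
    (M : Matrix m k ℝ) (A : Matrix k l ℝ) :
    ∑ i, ∑ j, ((M * A) i j) ^ 2 = dotpG (A * Aᵀ) (Mᵀ * M) := by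
  calc ∑ i, ∑ j, ((M * A) i j) ^ 2 = ((M * A) * (M * A)ᵀ).trace := by
        simpa only [sq, Matrix.hadamard_apply] using Matrix.sum_hadamard_eq (M * A) (M * A)
    _ = ((A * Aᵀ) * (Mᵀ * M)ᵀ).trace := by
        rw [Matrix.transpose_mul, Matrix.transpose_mul, Matrix.transpose_transpose,
          Matrix.mul_assoc, Matrix.trace_mul_comm]
        simp only [Matrix.mul_assoc]
    _ = dotpG (A * Aᵀ) (Mᵀ * M) := (Matrix.sum_hadamard_eq _ _).symm

theorem dotpG_smul_right {m n : Type*} [Fintype m] [Fintype n] (a b : Matrix m n ℝ) (c : ℝ) :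
    dotpG a (c • b) = c * dotpG a b := by
  simp only [dotpG, Matrix.smul_apply, smul_eq_mul, mul_sum]
  exact sum_congr rfl fun i _ => sum_congr rfl fun j _ => by ring

theorem integral_dotpG_right {m n α : Type*} [Fintype m] [Fintype n] [MeasurableSpace α]
    {μ : Measure α} (a : Matrix m n ℝ) {G : α → Matrix m n ℝ}
    (hG : ∀ i j, Integrable (fun x => G x i j) μ) :
    ∫ x, dotpG a (G x) ∂μ = dotpG a (Matrix.of fun i j => ∫ x, G x i j ∂μ) := by
  change ∫ x, ∑ i, ∑ j, a i j * G x i j ∂μ = ∑ i, ∑ j, a i j * ∫ x, G x i j ∂μ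
  rw [integral_finsetSum univ (f := fun i x => ∑ j, a i j * G x i j)
    fun i _ => integrable_finsetSum _ fun j _ => (hG i j).const_mul _]
  refine sum_congr rfl fun i _ => ?_
  rw [integral_finsetSum univ (f := fun j x => a i j * G x i j) fun j _ => (hG i j).const_mul _]
  exact sum_congr rfl fun j _ => integral_const_mul _ _

theorem tendsto_dotpG_right {m n α : Type*} [Fintype m] [Fintype n] {l : Filter α}
    (a : Matrix m n ℝ) {G : α → Matrix m n ℝ} {G₀ : Matrix m n ℝ}
    (hG : ∀ i j, Tendsto (fun t => G t i j) l (𝓝 (G₀ i j))) :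
    Tendsto (fun t => dotpG a (G t)) l (𝓝 (dotpG a G₀)) :=
  tendsto_finsetSum _ fun i _ => tendsto_finsetSum _ fun j _ => (hG i j).const_mul _

section KroneckerPower

variable {N D p : ℕ}

theorem kpowX_mul_kpowX_apply (x : Fin N → Fin D → ℝ) (n : Fin p → Fin N)
    (d d' : Fin p → Fin D) :
    kpowX p x n d * kpowX p x n d' = ∏ i, x (n i) (d i) * x (n i) (d' i) :=
  prod_mul_distrib.symm

theorem abs_kpowX_apply_le_one {x : Fin N → Fin D → ℝ}
    (hx : ∀ m j, x m j ∈ Set.Icc (-1 : ℝ) 1) (n : Fin p → Fin N) (d : Fin p → Fin D) :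
    |kpowX p x n d| ≤ 1 := by
  rw [kpowX, abs_prod]
  exact prod_le_one (fun _ _ => abs_nonneg _) fun i _ => abs_le.2 (hx _ _)

theorem measurable_kpowX_apply (n : Fin p → Fin N) (d : Fin p → Fin D) :
    Measurable fun x : Fin N → Fin D → ℝ => kpowX p x n d := by
  unfold kpowX
  fun_prop

variable (ν : Measure (Fin D → ℝ)) [IsProbabilityMeasure ν]

theorem ae_abs_kpowX_mul_le_one (hbdd : ∀ᵐ y ∂ν, ∀ j, y j ∈ Set.Icc (-1 : ℝ) 1)
    (n : Fin p → Fin N) (d d' : Fin p → Fin D) :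
    ∀ᵐ x ∂Measure.pi (fun _ : Fin N => ν), |kpowX p x n d * kpowX p x n d'| ≤ 1 := by
  filter_upwards [ae_pi_forall_of_ae hbdd] with x hx
  rw [abs_mul]
  exact mul_le_one₀ (abs_kpowX_apply_le_one hx n d) (abs_nonneg _)
    (abs_kpowX_apply_le_one hx n d')

theorem integrable_kpowX_mul (hbdd : ∀ᵐ y ∂ν, ∀ j, y j ∈ Set.Icc (-1 : ℝ) 1)
    (n : Fin p → Fin N) (d d' : Fin p → Fin D) :
    Integrable (fun x => kpowX p x n d * kpowX p x n d') (Measure.pi fun _ : Fin N => ν) :=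
  .of_bound ((measurable_kpowX_apply n d).mul (measurable_kpowX_apply n d')).aestronglyMeasurable 1
    (ae_abs_kpowX_mul_le_one ν hbdd n d d')

theorem abs_integral_kpowX_mul_le_one (hbdd : ∀ᵐ y ∂ν, ∀ j, y j ∈ Set.Icc (-1 : ℝ) 1)
    (n : Fin p → Fin N) (d d' : Fin p → Fin D) :
    |∫ x, kpowX p x n d * kpowX p x n d' ∂Measure.pi fun _ : Fin N => ν| ≤ 1 := by
  simpa using norm_integral_le_of_norm_le_const <|
    (ae_abs_kpowX_mul_le_one ν hbdd n d d').mono fun _ h => (Real.norm_eq_abs _).trans_le h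

theorem integral_kpowX_mul_of_injective {n : Fin p → Fin N} (hn : Injective n)
    (d d' : Fin p → Fin D) :
    ∫ x, kpowX p x n d * kpowX p x n d' ∂Measure.pi (fun _ : Fin N => ν)
      = kpowD p (Matrix.of fun i j => ∫ y, y i * y j ∂ν) d d' := by
  simp_rw [kpowX_mul_kpowX_apply]
  exact integral_prod_comp_of_injective ν hn fun i y => y (d i) * y (d' i)

theorem integrable_kpowX_gram_apply (hbdd : ∀ᵐ y ∂ν, ∀ j, y j ∈ Set.Icc (-1 : ℝ) 1)
    (d d' : Fin p → Fin D) :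
    Integrable (fun x => ((kpowX p x)ᵀ * kpowX p x) d d') (Measure.pi fun _ : Fin N => ν) := by
  simp only [Matrix.mul_apply, Matrix.transpose_apply]
  exact integrable_finsetSum _ fun n _ => integrable_kpowX_mul ν hbdd n d d'

theorem tendsto_integral_kpowX_gram_apply (hbdd : ∀ᵐ y ∂ν, ∀ j, y j ∈ Set.Icc (-1 : ℝ) 1)
    (d d' : Fin p → Fin D) :
    Tendsto (fun N : ℕ => ((N : ℝ) ^ p)⁻¹ *
        ∫ x, ((kpowX p x)ᵀ * kpowX p x) d d' ∂Measure.pi (fun _ : Fin N => ν))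
      atTop (𝓝 (kpowD p (Matrix.of fun i j => ∫ y, y i * y j ∂ν) d d')) := by
  have h_sum (N : ℕ) :
      ∫ x, ((kpowX p x)ᵀ * kpowX p x) d d' ∂Measure.pi (fun _ : Fin N => ν)
        = ∑ n, ∫ x, kpowX p x n d * kpowX p x n d' ∂Measure.pi (fun _ : Fin N => ν) := by
    simp only [Matrix.mul_apply, Matrix.transpose_apply]
    exact integral_finsetSum _ fun n _ => integrable_kpowX_mul ν hbdd n d d'
  simp_rw [h_sum]
  exact tendsto_inv_pow_mul_sum_of_eq_on_injective _
    (fun N n => abs_integral_kpowX_mul_le_one ν hbdd n d d')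
    fun N n hn => integral_kpowX_mul_of_injective ν hn d d'

end KroneckerPower

/-- If the rows of `X ∈ ℝ^{N×D}` are i.i.d. with entries in `[-1,1]`, then
`N^{-p} E|X^{⊗p} A|² → (A Aᵀ)·(E[X₁ᵀ X₁])^{⊗p}` as `N → ∞`. -/
theorem stmt_14 {D p L : ℕ} (A : Matrix (Fin p → Fin D) (Fin L) ℝ)
    (ν : Measure (Fin D → ℝ)) [IsProbabilityMeasure ν]
    (hbdd : ∀ᵐ x ∂ν, ∀ j : Fin D, x j ∈ Set.Icc (-1 : ℝ) 1) :
    Tendsto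
      (fun N : ℕ => ((N : ℝ) ^ p)⁻¹ *
        ∫ x, (∑ n : Fin p → Fin N, ∑ l : Fin L, ((kpowX p x * A) n l) ^ 2)
          ∂(Measure.pi fun _ : Fin N => ν))
      atTop
      (𝓝 (dotpG (A * A.transpose)
        (kpowD p (Matrix.of fun i j : Fin D => ∫ x, x i * x j ∂ν)))) := by
  simp_rw [sum_sq_mul_apply_eq_dotpG,
    integral_dotpG_right _ (integrable_kpowX_gram_apply ν hbdd), ← dotpG_smul_right]
  exact tendsto_dotpG_right _ fun d d' => tendsto_integral_kpowX_gram_apply ν hbdd d d'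
end
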